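/- If x is a random variable with standard Gaussian distribution N(0,1) and f : ℝ → ℝ is Lipschitz continuous, then the random variable f(x) is sub-gaussian; moreover its sub-gaussian norm satisfies ‖f(x) − E[f(x)]‖_{ψ₂} ≤ C·K, where K is the Lipschitz constant of f and C is an absolute constant. -/

import Mathlib

/-!
Under `N(0,1)` one computes `E[exp(x²/4)] = √2`. A `K`-Lipschitz `f` satisfies
`(f x - c)² ≤ 2K²x² + 2(f 0 - c)²`, so as soon as `t² ≥ 8K²` and `t² ≥ 8(f 0 - c)²` we get
`(f x - c)²/t² ≤ 1/4 + x²/4` and hence `E[exp((f - c)²/t²)] ≤ e^{1/4}√2 ≤ 2`.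
For `c = E f` we have `|f 0 - c| ≤ K E|x| ≤ K E[exp(x²/4)] = √2 K`, so every `t > 4K` qualifies
and `‖f - E f‖_{ψ₂} ≤ 4K`.
-/

open MeasureTheory ProbabilityTheory

/-- The sub-gaussian (ψ₂, Orlicz) norm of a real random variable:
`‖X‖_{ψ₂} = inf { t > 0 : E[exp(X²/t²)] ≤ 2 }`. -/
noncomputable def subgaussianNorm {Ω : Type*} [MeasurableSpace Ω]
    (P : Measure Ω) (X : Ω → ℝ) : ℝ :=
  sInf {t : ℝ | 0 < t ∧ (∫ ω, Real.exp (X ω ^ 2 / t ^ 2) ∂P) ≤ 2}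

/-- A real random variable is sub-gaussian if its ψ₂ norm is finite, i.e. some
`t > 0` satisfies `E[exp(X²/t²)] ≤ 2`. -/
def SubGaussian {Ω : Type*} [MeasurableSpace Ω] (P : Measure Ω) (X : Ω → ℝ) : Prop :=
  ∃ t : ℝ, 0 < t ∧ (∫ ω, Real.exp (X ω ^ 2 / t ^ 2) ∂P) ≤ 2

open Real
open scoped NNReal

lemma subgaussianNorm_le_of_forall_lt {Ω : Type*} [MeasurableSpace Ω] {P : Measure Ω}
    {X : Ω → ℝ} {s : ℝ} (hs : 0 ≤ s) (h : ∀ t, s < t → ∫ ω, exp (X ω ^ 2 / t ^ 2) ∂P ≤ 2) :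
    subgaussianNorm P X ≤ s :=
  le_of_forall_gt_imp_ge_of_dense fun t hst =>
    csInf_le ⟨0, fun _ ht => ht.1.le⟩ ⟨hs.trans_lt hst, h t hst⟩

lemma integrable_gaussianReal_iff {μ : ℝ} {v : ℝ≥0} {f : ℝ → ℝ} (hv : v ≠ 0) :
    Integrable f (gaussianReal μ v) ↔ Integrable (fun x => gaussianPDFReal μ v x • f x) := by
  rw [gaussianReal_of_var_ne_zero _ hv, integrable_withDensity_iff_integrable_smul'
    (measurable_gaussianPDF _ _) (ae_of_all _ fun _ => gaussianPDF_lt_top)]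
  simp only [toReal_gaussianPDF]

lemma gaussianPDFReal_mul_exp_sq_div_four (x : ℝ) :
    gaussianPDFReal 0 1 x * exp (x ^ 2 / 4) = (√(2 * π))⁻¹ * exp (-4⁻¹ * x ^ 2) := by
  rw [gaussianPDFReal, mul_assoc, ← exp_add]
  push_cast
  ring_nf

lemma integrable_exp_sq_div_four_gaussianReal :
    Integrable (fun x => exp (x ^ 2 / 4)) (gaussianReal 0 1) := by
  rw [integrable_gaussianReal_iff one_ne_zero]
  simp only [smul_eq_mul, gaussianPDFReal_mul_exp_sq_div_four]
  exact (integrable_exp_neg_mul_sq (by norm_num)).const_mul _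

lemma integral_exp_sq_div_four_gaussianReal :
    ∫ x, exp (x ^ 2 / 4) ∂gaussianReal 0 1 = √2 := by
  rw [integral_gaussianReal_eq_integral_smul one_ne_zero]
  simp only [smul_eq_mul, gaussianPDFReal_mul_exp_sq_div_four]
  rw [integral_const_mul, integral_gaussian, show π / 4⁻¹ = 2 * (2 * π) by ring,
    Real.sqrt_mul zero_le_two (2 * π), mul_comm, mul_inv_cancel_right₀ (by positivity)]

lemma abs_le_exp_sq_div_four (y : ℝ) : |y| ≤ exp (y ^ 2 / 4) := by
  nlinarith [add_one_le_exp (y ^ 2 / 4), sq_nonneg (|y| - 2), sq_abs y]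

lemma exp_quarter_mul_sqrt_two_le_two : exp 4⁻¹ * √2 ≤ 2 := by
  have h4 : exp 4⁻¹ ^ 4 = exp 1 := by rw [← exp_nat_mul]; norm_num
  have h2 : exp 4⁻¹ ^ 2 ≤ 2 := by nlinarith [exp_one_lt_d9, exp_pos 4⁻¹]
  rw [← pow_le_pow_iff_left₀ (by positivity) zero_le_two two_ne_zero, mul_pow,
    sq_sqrt zero_le_two]
  linarith

lemma integral_exp_sq_div_sq_le_two_of_le {X : ℝ → ℝ} {t : ℝ}
    (h : ∀ x, X x ^ 2 / t ^ 2 ≤ 4⁻¹ + x ^ 2 / 4) :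
    ∫ x, exp (X x ^ 2 / t ^ 2) ∂gaussianReal 0 1 ≤ 2 := calc
  _ ≤ ∫ x, exp 4⁻¹ * exp (x ^ 2 / 4) ∂gaussianReal 0 1 :=
      integral_mono_of_nonneg (ae_of_all _ fun _ => (exp_pos _).le)
        (integrable_exp_sq_div_four_gaussianReal.const_mul _)
        (ae_of_all _ fun x => (exp_le_exp.mpr (h x)).trans_eq (exp_add _ _))
  _ = exp 4⁻¹ * √2 := by rw [integral_const_mul, integral_exp_sq_div_four_gaussianReal]
  _ ≤ 2 := exp_quarter_mul_sqrt_two_le_two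

namespace LipschitzWith

variable {f : ℝ → ℝ} {K : ℝ≥0}

lemma abs_sub_le_mul_abs_add (hf : LipschitzWith K f) (c x : ℝ) :
    |f x - c| ≤ K * |x| + |f 0 - c| := by
  have h := hf.dist_le_mul x 0
  rw [dist_eq, dist_eq, sub_zero] at h
  linarith [abs_sub_le (f x) (f 0) c]

lemma sq_sub_div_sq_le (hf : LipschitzWith K f) {c t : ℝ} (ht : 0 < t)
    (hK : 8 * (K : ℝ) ^ 2 ≤ t ^ 2) (hc : 8 * (f 0 - c) ^ 2 ≤ t ^ 2) (x : ℝ) :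
    (f x - c) ^ 2 / t ^ 2 ≤ 4⁻¹ + x ^ 2 / 4 := by
  have h := hf.abs_sub_le_mul_abs_add c x
  have hsq : (f x - c) ^ 2 ≤ 2 * (K : ℝ) ^ 2 * x ^ 2 + 2 * (f 0 - c) ^ 2 := by
    nlinarith [sq_abs (f x - c), sq_abs x, sq_abs (f 0 - c), abs_nonneg (f x - c),
      sq_nonneg (K * |x| - |f 0 - c|)]
  rw [div_le_iff₀ (by positivity)]
  nlinarith [sq_nonneg x]

lemma integral_exp_sq_sub_div_sq_le_two (hf : LipschitzWith K f) {c t : ℝ} (ht : 0 < t)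
    (hK : 8 * (K : ℝ) ^ 2 ≤ t ^ 2) (hc : 8 * (f 0 - c) ^ 2 ≤ t ^ 2) :
    ∫ x, exp ((f x - c) ^ 2 / t ^ 2) ∂gaussianReal 0 1 ≤ 2 :=
  integral_exp_sq_div_sq_le_two_of_le (hf.sq_sub_div_sq_le ht hK hc)

lemma subGaussian_gaussianReal (hf : LipschitzWith K f) : SubGaussian (gaussianReal 0 1) f := by
  have hK : 8 * (K : ℝ) ^ 2 ≤ (3 * (K + |f 0|) + 1) ^ 2 := by
    nlinarith [abs_nonneg (f 0), K.coe_nonneg]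
  have hc : 8 * (f 0 - 0) ^ 2 ≤ (3 * (K + |f 0|) + 1) ^ 2 := by
    nlinarith [abs_nonneg (f 0), K.coe_nonneg, sq_abs (f 0)]
  refine ⟨3 * (K + |f 0|) + 1, by positivity, ?_⟩
  simpa only [sub_zero] using hf.integral_exp_sq_sub_div_sq_le_two (by positivity) hK hc

lemma integrable_gaussianReal (hf : LipschitzWith K f) : Integrable f (gaussianReal 0 1) :=
  ((integrable_exp_sq_div_four_gaussianReal.const_mul K).add (integrable_const |f 0|)).mono'
    hf.continuous.aestronglyMeasurable (ae_of_all _ fun x => by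
      have := hf.abs_sub_le_mul_abs_add 0 x
      simp only [sub_zero] at this
      simp only [norm_eq_abs, Pi.add_apply]
      nlinarith [abs_le_exp_sq_div_four x, K.coe_nonneg])

lemma abs_sub_integral_gaussianReal_le (hf : LipschitzWith K f) :
    |f 0 - ∫ y, f y ∂gaussianReal 0 1| ≤ √2 * K := calc
  _ = |∫ y, (f 0 - f y) ∂gaussianReal 0 1| := by
      rw [integral_sub (integrable_const _) hf.integrable_gaussianReal, integral_const]
      simp
  _ ≤ ∫ y, |f 0 - f y| ∂gaussianReal 0 1 := abs_integral_le_integral_abs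
  _ ≤ ∫ y, K * exp (y ^ 2 / 4) ∂gaussianReal 0 1 :=
      integral_mono_of_nonneg (ae_of_all _ fun _ => abs_nonneg _)
        (integrable_exp_sq_div_four_gaussianReal.const_mul _) (ae_of_all _ fun y => by
          have := hf.abs_sub_le_mul_abs_add (f 0) y
          rw [sub_self, abs_zero, add_zero, abs_sub_comm] at this
          nlinarith [abs_le_exp_sq_div_four y, K.coe_nonneg])
  _ = √2 * K := by rw [integral_const_mul, integral_exp_sq_div_four_gaussianReal, mul_comm]

lemma subgaussianNorm_sub_integral_gaussianReal_le (hf : LipschitzWith K f) :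
    subgaussianNorm (gaussianReal 0 1) (fun x => f x - ∫ y, f y ∂gaussianReal 0 1) ≤ 4 * K := by
  refine subgaussianNorm_le_of_forall_lt (by positivity) fun t ht => ?_
  have hm : (f 0 - ∫ y, f y ∂gaussianReal 0 1) ^ 2 ≤ 2 * K ^ 2 := calc
    _ = |f 0 - ∫ y, f y ∂gaussianReal 0 1| ^ 2 := (sq_abs _).symm
    _ ≤ (√2 * K) ^ 2 := pow_le_pow_left₀ (abs_nonneg _) hf.abs_sub_integral_gaussianReal_le 2
    _ = 2 * K ^ 2 := by rw [mul_pow, sq_sqrt zero_le_two]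
  have h4K : 16 * (K : ℝ) ^ 2 ≤ t ^ 2 := by nlinarith [K.coe_nonneg]
  exact hf.integral_exp_sq_sub_div_sq_le_two (by linarith [K.coe_nonneg])
    (by linarith [sq_nonneg (K : ℝ)]) (by linarith)

end LipschitzWith

/-- **Lemma 1.** If `x ∼ N(0,1)` and `f : ℝ → ℝ` is Lipschitz with constant `K`, then
`f(x)` is sub-gaussian and moreover `‖f(x) − E[f(x)]‖_{ψ₂} ≤ C·K` for an absolute
constant `C > 0`. -/
theorem statement5 :
    ∃ C : ℝ, 0 < C ∧ ∀ (f : ℝ → ℝ) (K : NNReal), LipschitzWith K f →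
      SubGaussian (gaussianReal 0 1) f ∧
      subgaussianNorm (gaussianReal 0 1)
        (fun x => f x - ∫ y, f y ∂(gaussianReal 0 1)) ≤ C * (K : ℝ) :=
  ⟨4, four_pos, fun _ _ hf =>
    ⟨hf.subGaussian_gaussianReal, hf.subgaussianNorm_sub_integral_gaussianReal_le⟩⟩
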